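/- For the sequence λ_0 = 0, λ_{n+1} = (1/2)(λ_n + sqrt(λ_n^2 + 4)), one has lim_{n→∞} (λ_{n+1}^2 - λ_n^2) = 2. -/

import Mathlib

/-! `λ_{n+1}` is the positive root of `x² = λ_n x + 1`, so `λ_n = λ_{n+1} - λ_{n+1}⁻¹` and squaring
gives `λ_{n+1}² - λ_n² = 2 - λ_{n+1}⁻²`. Each increment is therefore at least `1`, so `λ_n² ≥ n`
and the correction term `λ_{n+1}⁻²` tends to `0`. -/

noncomputable def lam : ℕ → ℝ
  | 0 => 0
  | n + 1 => (lam n + Real.sqrt (lam n ^ 2 + 4)) / 2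

open Filter

lemma sq_half_add_sqrt_sq_add_four (a : ℝ) :
    ((a + √(a ^ 2 + 4)) / 2) ^ 2 = a * ((a + √(a ^ 2 + 4)) / 2) + 1 := by
  have h : √(a ^ 2 + 4) ^ 2 = a ^ 2 + 4 := Real.sq_sqrt (by positivity)
  linear_combination h / 4

lemma lam_nonneg (n : ℕ) : 0 ≤ lam n := by
  cases n with
  | zero => simp [lam]
  | succ n =>
    have : |lam n| ≤ √(lam n ^ 2 + 4) := by
      rw [← Real.sqrt_sq_eq_abs]
      exact Real.sqrt_le_sqrt (by linarith)
    rw [lam]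
    linarith [neg_abs_le (lam n)]

lemma lam_succ_sq (n : ℕ) : lam (n + 1) ^ 2 = lam n * lam (n + 1) + 1 :=
  sq_half_add_sqrt_sq_add_four (lam n)

lemma one_le_lam_succ_sq (n : ℕ) : 1 ≤ lam (n + 1) ^ 2 := by
  rw [lam_succ_sq]
  linarith [mul_nonneg (lam_nonneg n) (lam_nonneg (n + 1))]

lemma lam_succ_sq_sub_sq (n : ℕ) : lam (n + 1) ^ 2 - lam n ^ 2 = 2 - (lam (n + 1) ^ 2)⁻¹ := by
  have hne : lam (n + 1) ≠ 0 := by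
    intro h
    have h1 := one_le_lam_succ_sq n
    rw [h] at h1
    norm_num at h1
  have hprev : lam n = lam (n + 1) - (lam (n + 1))⁻¹ := by
    field_simp
    linear_combination -lam_succ_sq n
  rw [hprev]
  field_simp
  ring

lemma natCast_le_lam_sq (n : ℕ) : (n : ℝ) ≤ lam n ^ 2 := by
  induction n with
  | zero => simp [lam]
  | succ n ih =>
    have hinv : (lam (n + 1) ^ 2)⁻¹ ≤ 1 := inv_le_one_of_one_le₀ (one_le_lam_succ_sq n)
    have hstep := lam_succ_sq_sub_sq n
    push_cast
    linarith

lemma tendsto_lam_sq_atTop : Tendsto (fun n => lam n ^ 2) atTop atTop :=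
  tendsto_atTop_mono natCast_le_lam_sq tendsto_natCast_atTop_atTop

theorem stmt_6 :
    Filter.Tendsto (fun n => lam (n + 1) ^ 2 - lam n ^ 2) Filter.atTop (nhds 2) := by
  simp only [lam_succ_sq_sub_sq]
  have hinv : Tendsto (fun n => (lam (n + 1) ^ 2)⁻¹) atTop (nhds 0) :=
    tendsto_inv_atTop_zero.comp (tendsto_lam_sq_atTop.comp (tendsto_add_atTop_nat 1))
  simpa using hinv.const_sub 2
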